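/- arXiv:2006.12254 — 9 statements merged into one kernel-verified Lean document; each statement's English description precedes it below -/
import Mathlib

section
/- Let G and H be finite graphs such that there exists a graph homomorphism from G to H. Let A be a type, let T₃ be a set of ternary operations A³ → A and let T₆ be a set of 6-ary operations A⁶ → A. If there is a satisfying assignment for the condition Σ_H over A in which every operation f_v belongs to T₃ and every operation g_{(u,v)} belongs to T₆, then there is a satisfying assignment for the condition Σ_G over A in which every f_v belongs to T₃ and every g_{(u,v)} belongs to T₆. -/
/-- The assignment `f`, `g` satisfies the height 1 condition `Σ_G` over `A`:
for every edge `(u,v)` of `G` and all `x y z`,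
`f u x y z = g u v x y x z y z` and `f v x y z = g u v y x z x z y`. -/
def SatisfiesSigma {V A : Type*} (G : SimpleGraph V)
    (f : V → A → A → A → A) (g : V → V → A → A → A → A → A → A → A) : Prop :=
  ∀ u v, G.Adj u v → ∀ x y z : A,
    f u x y z = g u v x y x z y z ∧ f v x y z = g u v y x z x z y

theorem stmt0 {VG VH A : Type*} [Fintype VG] [Fintype VH]
    (G : SimpleGraph VG) (H : SimpleGraph VH)
    (hhom : Nonempty (G →g H))
    (T3 : Set (A → A → A → A)) (T6 : Set (A → A → A → A → A → A → A))
    (hH : ∃ (f : VH → A → A → A → A) (g : VH → VH → A → A → A → A → A → A → A),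
      (∀ v, f v ∈ T3) ∧ (∀ u v, H.Adj u v → g u v ∈ T6) ∧ SatisfiesSigma H f g) :
    ∃ (f : VG → A → A → A → A) (g : VG → VG → A → A → A → A → A → A → A),
      (∀ v, f v ∈ T3) ∧ (∀ u v, G.Adj u v → g u v ∈ T6) ∧ SatisfiesSigma G f g := by
  obtain ⟨φ⟩ := hhom
  obtain ⟨f, g, hf, hg, hs⟩ := hH
  exact ⟨fun v => f (φ v), fun u v => g (φ u) (φ v), fun v => hf _,
    fun u v h => hg _ _ (φ.map_adj h),
    fun u v h x y z => hs _ _ (φ.map_adj h) x y z⟩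
end

section
/- Let G be a finite graph, and let H be a graph containing three pairwise adjacent vertices (a copy of K₃). If the polymorphisms of H satisfy Σ_G, then there exists a graph homomorphism from G to H. -/
/-- `p` is a ternary polymorphism of the graph `H`. -/
def IsPoly3 {V : Type*} (H : SimpleGraph V) (p : V → V → V → V) : Prop :=
  ∀ a₁ a₂ a₃ b₁ b₂ b₃, H.Adj a₁ b₁ → H.Adj a₂ b₂ → H.Adj a₃ b₃ →
    H.Adj (p a₁ a₂ a₃) (p b₁ b₂ b₃)

/-- `p` is a 6-ary polymorphism of the graph `H`. -/
def IsPoly6 {V : Type*} (H : SimpleGraph V) (p : V → V → V → V → V → V → V) : Prop :=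
  ∀ a₁ a₂ a₃ a₄ a₅ a₆ b₁ b₂ b₃ b₄ b₅ b₆,
    H.Adj a₁ b₁ → H.Adj a₂ b₂ → H.Adj a₃ b₃ → H.Adj a₄ b₄ → H.Adj a₅ b₅ → H.Adj a₆ b₆ →
    H.Adj (p a₁ a₂ a₃ a₄ a₅ a₆) (p b₁ b₂ b₃ b₄ b₅ b₆)

theorem stmt1 {VG VH : Type*} [Fintype VG]
    (G : SimpleGraph VG) (H : SimpleGraph VH)
    (v₁ v₂ v₃ : VH) (h12 : H.Adj v₁ v₂) (h13 : H.Adj v₁ v₃) (h23 : H.Adj v₂ v₃)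
    (hpol : ∃ (f : VG → VH → VH → VH → VH)
        (g : VG → VG → VH → VH → VH → VH → VH → VH → VH),
      (∀ v, IsPoly3 H (f v)) ∧ (∀ u v, G.Adj u v → IsPoly6 H (g u v)) ∧
        SatisfiesSigma G f g) :
    Nonempty (G →g H) := by
  obtain ⟨f, g, hf, hg, hs⟩ := hpol
  refine ⟨⟨fun v => f v v₁ v₂ v₃, ?_⟩⟩
  intro u v huv
  obtain ⟨h1, h2⟩ := hs u v huv v₁ v₂ v₃
  show H.Adj (f u v₁ v₂ v₃) (f v v₁ v₂ v₃)
  rw [h1, h2]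
  exact hg u v huv _ _ _ _ _ _ _ _ _ _ _ _ h12 h12.symm h13 h13.symm h23 h23.symm
end

section
/- Let G be a finite graph and let A be a type with at least two distinct elements. If there is a satisfying assignment for the condition Σ_G over A in which every f_v is a ternary projection on A and every g_{(u,v)} is a 6-ary projection on A, then G is 3-colorable. -/
def IsProj3 {A : Type*} (f : A → A → A → A) : Prop :=
  ∃ i : Fin 3, ∀ x : Fin 3 → A, f (x 0) (x 1) (x 2) = x i

def IsProj6 {A : Type*} (g : A → A → A → A → A → A → A) : Prop :=
  ∃ i : Fin 6, ∀ x : Fin 6 → A, g (x 0) (x 1) (x 2) (x 3) (x 4) (x 5) = x i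

theorem stmt3 {V : Type*} [Fintype V] (G : SimpleGraph V)
    {A : Type*} (a b : A) (hab : a ≠ b)
    (h : ∃ (f : V → A → A → A → A) (g : V → V → A → A → A → A → A → A → A),
      (∀ v, IsProj3 (f v)) ∧ (∀ u v, G.Adj u v → IsProj6 (g u v)) ∧
        SatisfiesSigma G f g) :
    G.Colorable 3 := by
  obtain ⟨f, g, hf, hg, hs⟩ := h
  choose i hi using hf
  refine ⟨SimpleGraph.Coloring.mk (fun v => i v) ?_⟩
  intro u v huv hc
  obtain ⟨j, hj⟩ := hg u v huv
  have E1 : ∀ x y z : A, (![x,y,z] : Fin 3 → A) (i u)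
      = (![x,y,x,z,y,z] : Fin 6 → A) j := by
    intro x y z
    have h1 := (hs u v huv x y z).1
    have h2 := hi u ![x,y,z]
    have h3 := hj ![x,y,x,z,y,z]
    simp at h2 h3
    rw [← h2, h1]; exact h3
  have E2 : ∀ x y z : A, (![x,y,z] : Fin 3 → A) (i v)
      = (![y,x,z,x,z,y] : Fin 6 → A) j := by
    intro x y z
    have h1 := (hs u v huv x y z).2
    have h2 := hi v ![x,y,z]
    have h3 := hj ![y,x,z,x,z,y]
    simp at h2 h3
    rw [← h2, h1]; exact h3
  have E3 : ∀ x y z : A, (![x,y,x,z,y,z] : Fin 6 → A) j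
      = (![y,x,z,x,z,y] : Fin 6 → A) j := by
    intro x y z
    have hc' : i u = i v := hc
    rw [← E1, hc', E2]
  fin_cases j <;> simp only [Matrix.cons_val_zero, Matrix.cons_val_one,
      Matrix.head_cons, Matrix.cons_val_two, Matrix.tail_cons,
      Matrix.cons_val_three, Matrix.cons_val_four, Matrix.head_fin_const,
      Fin.mk_zero, Fin.mk_one, Fin.isValue] at E3 <;>
    first
      | exact hab (E3 a b b)
      | exact hab (E3 a b b).symm
      | exact hab (E3 a a b)
      | exact hab (E3 a a b).symm
end

section
/- Let G be a finite connected graph that is not 3-colorable, and let H be a graph with countable vertex set that is universal for Forb(G). Then the polymorphisms of H do not satisfy Σ_G. -/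
theorem stmt5 {VG VH : Type} [Fintype VG] [Countable VH]
    (G : SimpleGraph VG) (hconn : G.Connected) (hncol : ¬ G.Colorable 3)
    (H : SimpleGraph VH)
    (huniv : ∀ (W : Type) (C : SimpleGraph W), Countable W →
      (Nonempty (C ↪g H) ↔ ¬ Nonempty (G →g C))) :
    ¬ ∃ (f : VG → VH → VH → VH → VH)
        (g : VG → VG → VH → VH → VH → VH → VH → VH → VH),
      (∀ v, IsPoly3 H (f v)) ∧ (∀ u v, G.Adj u v → IsPoly6 H (g u v)) ∧
        SatisfiesSigma G f g := by
  rintro ⟨f, g, hf, hg, hsig⟩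
  -- H embeds into itself, so there is no homomorphism G →g H
  have hGH : ¬ Nonempty (G →g H) := by
    rw [← huniv VH H inferInstance]
    exact ⟨SimpleGraph.Embedding.refl⟩
  -- K3 embeds into H since G is not 3-colorable
  have hK3 : Nonempty ((⊤ : SimpleGraph (Fin 3)) ↪g H) := by
    rw [huniv (Fin 3) ⊤ inferInstance]
    rintro ⟨h⟩
    exact hncol ⟨h⟩
  obtain ⟨e⟩ := hK3
  set a := e 0
  set b := e 1
  set c := e 2
  have hab : H.Adj a b := e.map_adj_iff.2 (by decide)
  have hac : H.Adj a c := e.map_adj_iff.2 (by decide)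
  have hbc : H.Adj b c := e.map_adj_iff.2 (by decide)
  refine hGH ⟨⟨fun u => f u a b c, ?_⟩⟩
  intro u v huv
  obtain ⟨h1, h2⟩ := hsig u v huv a b c
  simp only [h1, h2]
  exact hg u v huv a b a c b c b a c a c b hab hab.symm hac hac.symm hbc hbc.symm
end

section
/- Let G be a finite connected graph that is not 3-colorable, and let H be a graph with countable vertex set that is universal for Forb(G). Then for every natural number n strictly larger than the number of edges of G, the graph H has an n-ary polymorphism that is a quasi near unanimity operation. -/
/-- `p` is an `n`-ary polymorphism of the graph `H`. -/
def IsPolyN {V : Type*} (H : SimpleGraph V) {n : ℕ} (p : (Fin n → V) → V) : Prop :=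
  ∀ a b : Fin n → V, (∀ i, H.Adj (a i) (b i)) → H.Adj (p a) (p b)

/-- `p` is a quasi near unanimity operation: it takes the same value on all tuples
whose coordinates equal a single value `x` with at most one exception. -/
def IsQNU {A : Type*} {n : ℕ} (p : (Fin n → A) → A) : Prop :=
  ∀ (x y : A) (i : Fin n),
    p (Function.update (fun _ => x) i y) = p (fun _ => x)

/-!
Collapse every near-unanimous `n`-tuple over `H` to its majority value (well defined once
`n ≥ 3`, which holds because `G` is not 3-colorable and so has at least two edges), and let `Q`
be the image of the `n`-th categorical power of `H` under this collapse. If `G` mapped to `Q`,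
every edge of `G` would be respected by all coordinate projections but one, so, as `n` exceeds
the number of edges, some coordinate would be a homomorphism `G → H`; this is impossible because
`H` itself lies in `Forb(G)`. Hence `Q` embeds into `H`, and collapsing followed by this
embedding is a quasi near unanimity polymorphism of `H`.
-/

open SimpleGraph

lemma Finset.exists_forall_of_card_lt_of_forall_ne {α ι : Type*} [Fintype ι] {s : Finset α}
    (hs : s.card < Fintype.card ι) {P : α → ι → Prop}
    (hP : ∀ a ∈ s, ∃ j, ∀ i, i ≠ j → P a i) : ∃ i, ∀ a ∈ s, P a i := by
  by_contra! hbad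
  choose f hfs hf using hbad
  obtain ⟨i, -, k, -, hik, hfik⟩ :=
    Finset.exists_ne_map_eq_of_card_lt_of_maps_to (s := Finset.univ) (t := s) hs
      (fun i _ => hfs i)
  obtain ⟨j, hj⟩ := hP (f i) (hfs i)
  have hij : i = j := by_contra fun h => hf i (hj i h)
  have hkj : k = j := by_contra fun h => hf k (hfik ▸ hj k h)
  exact hik (hij.trans hkj.symm)

lemma SimpleGraph.exists_forall_adj_of_card_edgeFinset_lt {V W ι : Type*} [Fintype ι]
    {G : SimpleGraph V} [Fintype G.edgeSet] {H : SimpleGraph W} (g : ι → V → W)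
    (hcard : G.edgeFinset.card < Fintype.card ι)
    (hg : ∀ u v, G.Adj u v → ∃ j, ∀ i, i ≠ j → H.Adj (g i u) (g i v)) :
    ∃ i, ∀ u v, G.Adj u v → H.Adj (g i u) (g i v) := by
  obtain ⟨i, hi⟩ := Finset.exists_forall_of_card_lt_of_forall_ne
    (P := fun e i => e ∈ (H.comap (g i)).edgeSet) hcard (by
      intro e he
      induction e using Sym2.ind with
      | _ u v => simpa using hg u v (by simpa using he))
  exact ⟨i, fun u v huv => by simpa using hi s(u, v) (by simpa using huv)⟩

lemma SimpleGraph.colorable_two_of_card_edgeFinset_le_one {V : Type*} {G : SimpleGraph V}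
    [Fintype G.edgeSet] (h : G.edgeFinset.card ≤ 1) : G.Colorable 2 := by
  classical
  rcases isEmpty_or_nonempty V with _ | ⟨⟨v₀⟩⟩
  · exact .of_isEmpty 2
  have : Nonempty (Sym2 V) := ⟨s(v₀, v₀)⟩
  obtain ⟨e, he⟩ := Finset.card_le_one_iff_subset_singleton.mp h
  induction e using Sym2.ind with
  | _ u v =>
    refine ⟨Coloring.mk (fun w => if w = u then 0 else 1) fun {a b} hab => ?_⟩
    have hedge : s(a, b) = s(u, v) := Finset.mem_singleton.mp (he (by simpa using hab))
    rcases Sym2.eq_iff.mp hedge with ⟨rfl, rfl⟩ | ⟨rfl, rfl⟩ <;> simp [hab.ne, hab.ne.symm]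

section Collapse

variable {A : Type*} {n : ℕ}

def IsNearUnanimous (a : Fin n → A) (x : A) : Prop :=
  ∃ j, ∀ i, i ≠ j → a i = x

lemma isNearUnanimous_update (x y : A) (j : Fin n) :
    IsNearUnanimous (Function.update (fun _ => x) j y) x :=
  ⟨j, fun _ hi => Function.update_of_ne hi _ _⟩

lemma Fin.exists_ne_and_ne (hn : 3 ≤ n) (j k : Fin n) : ∃ i, i ≠ j ∧ i ≠ k :=
  ENat.exists_ne_ne_of_three_le (by simpa using hn) j k

lemma IsNearUnanimous.exists_eq_and_eq (hn : 3 ≤ n) {a b : Fin n → A} {x y : A}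
    (ha : IsNearUnanimous a x) (hb : IsNearUnanimous b y) : ∃ i, a i = x ∧ b i = y := by
  obtain ⟨j, hj⟩ := ha
  obtain ⟨k, hk⟩ := hb
  obtain ⟨i, hij, hik⟩ := Fin.exists_ne_and_ne hn j k
  exact ⟨i, hj i hij, hk i hik⟩

lemma IsNearUnanimous.unique (hn : 3 ≤ n) {a : Fin n → A} {x y : A}
    (hx : IsNearUnanimous a x) (hy : IsNearUnanimous a y) : x = y := by
  obtain ⟨i, rfl, rfl⟩ := hx.exists_eq_and_eq hn hy
  rfl

lemma IsNearUnanimous.adj {H : SimpleGraph A} (hn : 3 ≤ n) {a b : Fin n → A} {x y : A}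
    (ha : IsNearUnanimous a x) (hb : IsNearUnanimous b y) (hab : ∀ i, H.Adj (a i) (b i)) :
    H.Adj x y := by
  obtain ⟨i, rfl, rfl⟩ := ha.exists_eq_and_eq hn hb
  exact hab i

open Classical in
noncomputable def collapse (a : Fin n → A) : A ⊕ (Fin n → A) :=
  if h : ∃ x, IsNearUnanimous a x then .inl h.choose else .inr a

lemma collapse_of_isNearUnanimous (hn : 3 ≤ n) {a : Fin n → A} {x : A}
    (h : IsNearUnanimous a x) : collapse a = .inl x := by
  have hex : ∃ y, IsNearUnanimous a y := ⟨x, h⟩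
  rw [collapse, dif_pos hex, hex.choose_spec.unique hn h]

lemma isNearUnanimous_of_collapse_eq_inl {a : Fin n → A} {x : A}
    (h : collapse a = .inl x) : IsNearUnanimous a x := by
  unfold collapse at h
  split at h
  · exact Sum.inl_injective h ▸ ‹∃ x, IsNearUnanimous a x›.choose_spec
  · simp at h

lemma eq_of_collapse_eq_inr {a b : Fin n → A} (h : collapse a = .inr b) : a = b := by
  unfold collapse at h
  split at h
  · simp at h
  · exact Sum.inr_injective h

/-- The `i`-th coordinate of a collapsed tuple; a collapsed value `x` stands for the constant
tuple. -/
def coord (i : Fin n) : A ⊕ (Fin n → A) → A :=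
  Sum.elim id (· i)

@[simp] lemma coord_inl (i : Fin n) (x : A) : coord i (.inl x : A ⊕ (Fin n → A)) = x := rfl

@[simp] lemma coord_inr (i : Fin n) (a : Fin n → A) : coord i (.inr a) = a i := rfl

lemma exists_forall_ne_coord_collapse (hn : 0 < n) (a : Fin n → A) :
    ∃ j, ∀ i, i ≠ j → coord i (collapse a) = a i := by
  rcases h : collapse a with x | b
  · obtain ⟨j, hj⟩ := isNearUnanimous_of_collapse_eq_inl h
    exact ⟨j, fun i hi => (hj i hi).symm⟩
  · obtain rfl := eq_of_collapse_eq_inr h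
    exact ⟨⟨0, hn⟩, fun i _ => rfl⟩

variable (n) in
def collapseGraph (H : SimpleGraph A) : SimpleGraph (A ⊕ (Fin n → A)) where
  Adj w w' := w ≠ w' ∧ ∃ a b, collapse a = w ∧ collapse b = w' ∧ ∀ i, H.Adj (a i) (b i)
  symm := ⟨fun _ _ ⟨hne, a, b, ha, hb, hab⟩ => ⟨hne.symm, b, a, hb, ha, fun i => (hab i).symm⟩⟩
  loopless := ⟨fun _ h => h.1 rfl⟩

variable {H : SimpleGraph A}

lemma collapse_ne_of_forall_adj (hn : 3 ≤ n) {a b : Fin n → A}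
    (hab : ∀ i, H.Adj (a i) (b i)) : collapse a ≠ collapse b := by
  intro hcollapse
  obtain ⟨j, hj⟩ := exists_forall_ne_coord_collapse (by omega) a
  obtain ⟨k, hk⟩ := exists_forall_ne_coord_collapse (by omega) b
  obtain ⟨i, hij, hik⟩ := Fin.exists_ne_and_ne hn j k
  exact (hab i).ne ((hj i hij).symm.trans (hcollapse ▸ hk i hik))

lemma collapseGraph_adj_collapse (hn : 3 ≤ n) {a b : Fin n → A}
    (hab : ∀ i, H.Adj (a i) (b i)) : (collapseGraph n H).Adj (collapse a) (collapse b) :=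
  ⟨collapse_ne_of_forall_adj hn hab, a, b, rfl, rfl, hab⟩

/-- Only the exceptional coordinate of a collapsed near-unanimous endpoint can fail: two
collapsed endpoints are adjacent in `H` by `IsNearUnanimous.adj`. -/
lemma collapseGraph.exists_forall_ne_adj_coord (hn : 3 ≤ n) {w w' : A ⊕ (Fin n → A)}
    (h : (collapseGraph n H).Adj w w') : ∃ j, ∀ i, i ≠ j → H.Adj (coord i w) (coord i w') := by
  obtain ⟨-, a, b, rfl, rfl, hab⟩ := h
  rcases ha : collapse a with x | a'
  · rcases hb : collapse b with y | b'
    · have hxy := (isNearUnanimous_of_collapse_eq_inl ha).adj hn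
        (isNearUnanimous_of_collapse_eq_inl hb) hab
      exact ⟨⟨0, by omega⟩, fun i _ => by simpa using hxy⟩
    · obtain rfl := eq_of_collapse_eq_inr hb
      obtain ⟨j, hj⟩ := exists_forall_ne_coord_collapse (by omega) a
      exact ⟨j, fun i hi => by simpa [← ha, hj i hi] using hab i⟩
  · obtain rfl := eq_of_collapse_eq_inr ha
    obtain ⟨k, hk⟩ := exists_forall_ne_coord_collapse (by omega) b
    exact ⟨k, fun i hi => by simpa [hk i hi] using hab i⟩

lemma collapseGraph.isEmpty_hom {V : Type*} {G : SimpleGraph V} [Fintype G.edgeSet]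
    (hn : 3 ≤ n) (hcard : G.edgeFinset.card < n) (hGH : IsEmpty (G →g H)) :
    IsEmpty (G →g collapseGraph n H) := by
  refine ⟨fun f => ?_⟩
  obtain ⟨i, hi⟩ := exists_forall_adj_of_card_edgeFinset_lt (fun i u => coord i (f u))
    (by simpa using hcard) fun u v huv => exists_forall_ne_adj_coord hn (f.map_adj huv)
  exact hGH.false ⟨fun u => coord i (f u), hi _ _⟩

end Collapse

theorem stmt6_general {VG VH : Type} [Fintype VG] [Countable VH]
    (G : SimpleGraph VG) [DecidableRel G.Adj]
    (hncol : ¬ G.Colorable 3)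
    (H : SimpleGraph VH)
    (huniv : ∀ (W : Type) (C : SimpleGraph W), Countable W →
      (Nonempty (C ↪g H) ↔ ¬ Nonempty (G →g C)))
    (n : ℕ) (hn : G.edgeFinset.card < n) :
    ∃ p : (Fin n → VH) → VH, IsPolyN H p ∧ IsQNU p := by
  have hn3 : 3 ≤ n := by
    by_contra!
    exact hncol ((colorable_two_of_card_edgeFinset_le_one (by omega)).mono (by norm_num))
  have hGH : IsEmpty (G →g H) :=
    not_nonempty_iff.mp ((huniv VH H inferInstance).mp ⟨Embedding.refl⟩)
  obtain ⟨e⟩ := (huniv _ (collapseGraph n H) inferInstance).mpr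
    (not_nonempty_iff.mpr (collapseGraph.isEmpty_hom hn3 hn hGH))
  refine ⟨fun a => e (collapse a), fun a b hab => e.map_adj_iff.mpr
    (collapseGraph_adj_collapse hn3 hab), fun x y i => ?_⟩
  dsimp only
  rw [collapse_of_isNearUnanimous hn3 (isNearUnanimous_update x y i),
    collapse_of_isNearUnanimous hn3 ⟨i, fun _ _ => rfl⟩]

theorem stmt6 {VG VH : Type} [Fintype VG] [Countable VH]
    (G : SimpleGraph VG) [DecidableRel G.Adj]
    (hconn : G.Connected) (hncol : ¬ G.Colorable 3)
    (H : SimpleGraph VH)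
    (huniv : ∀ (W : Type) (C : SimpleGraph W), Countable W →
      (Nonempty (C ↪g H) ↔ ¬ Nonempty (G →g C)))
    (n : ℕ) (hn : G.edgeFinset.card < n) :
    ∃ p : (Fin n → VH) → VH, IsPolyN H p ∧ IsQNU p :=
  stmt6_general G hncol H huniv n hn
end

section
/- Let G be a finite graph with m edges, and let H be a graph such that there is no homomorphism from G to H. Then for every n ≥ 3 with n > m, there is no graph homomorphism from G to the quotient graph Hⁿ/∼. -/
/-- `a` is `x`-almost-constant: all coordinates of `a` except possibly one equal `x`. -/
def AlmostConst {V : Type*} {n : ℕ} (x : V) (a : Fin n → V) : Prop :=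
  ∃ i : Fin n, ∀ j, j ≠ i → a j = x

/-- The relation `∼`: `a ∼ b` iff `a = b` or `a` and `b` are both `x`-almost-constant
for some vertex `x`. -/
def SimRel {V : Type*} (n : ℕ) (a b : Fin n → V) : Prop :=
  a = b ∨ ∃ x : V, AlmostConst x a ∧ AlmostConst x b

/-- The quotient graph `Hⁿ/∼`: vertices are the classes of `∼`, and two distinct
classes are adjacent iff they contain representatives that are adjacent in every
coordinate. -/
def quotGraph {V : Type*} (H : SimpleGraph V) (n : ℕ) :
    SimpleGraph (Quot (SimRel (V := V) n)) where
  Adj A B := A ≠ B ∧ ∃ a b : Fin n → V,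
    Quot.mk (SimRel n) a = A ∧ Quot.mk (SimRel n) b = B ∧ ∀ i, H.Adj (a i) (b i)
  symm := by
    refine ⟨?_⟩
    rintro A B ⟨hne, a, b, ha, hb, hadj⟩
    exact ⟨hne.symm, b, a, hb, ha, fun i => (hadj i).symm⟩
  loopless := by
    refine ⟨?_⟩
    rintro A ⟨hne, -⟩
    exact hne rfl

/-!
If `G → Hⁿ/∼` were a homomorphism, replace the chosen representative of each class by the
constant tuple `(x, …, x)` when the class is that of the `x`-almost-constant tuples. Two
adjacent classes then have such normal forms that are adjacent in all coordinates but at most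
one: an almost-constant tuple differs from its normal form in one coordinate, and two
almost-constant tuples adjacent coordinatewise have adjacent constants because `n ≥ 3` leaves
a coordinate where neither deviates. So every edge of `G` spoils at most one coordinate, and as
`G` has fewer than `n` edges some coordinate gives a homomorphism `G → H`.
-/

theorem SimpleGraph.exists_coord_adj_of_card_edgeFinset_lt {V W ι : Type*} [Fintype V]
    [Fintype ι] {G : SimpleGraph V} [DecidableRel G.Adj] {H : SimpleGraph W} (c : V → ι → W)
    (hc : ∀ u v, G.Adj u v → ∃ k, ∀ i ≠ k, H.Adj (c u i) (c v i))
    (hcard : G.edgeFinset.card < Fintype.card ι) :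
    ∃ i, ∀ u v, G.Adj u v → H.Adj (c u i) (c v i) := by
  classical
  let bad : Sym2 V → Finset ι := fun e => {i | Sym2.map (c · i) e ∉ H.edgeSet}
  have hbad : ∀ e ∈ G.edgeFinset, (bad e).card ≤ 1 := by
    intro e he
    induction e using Sym2.ind with | h u v => ?_
    obtain ⟨k, hk⟩ := hc u v (by simpa using he)
    refine (Finset.card_le_card (t := {k}) fun i hi => ?_).trans_eq (Finset.card_singleton k)
    have hnadj : ¬ H.Adj (c u i) (c v i) := by simpa [bad] using hi
    exact Finset.mem_singleton.mpr (by_contra fun hik => hnadj (hk i hik))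
  have hspoiled : (G.edgeFinset.biUnion bad).card < (Finset.univ : Finset ι).card :=
    calc (G.edgeFinset.biUnion bad).card
        ≤ ∑ e ∈ G.edgeFinset, (bad e).card := Finset.card_biUnion_le
      _ ≤ G.edgeFinset.card := by simpa using Finset.sum_le_sum hbad
      _ < _ := hcard
  obtain ⟨i, -, hi⟩ := Finset.exists_mem_notMem_of_card_lt_card hspoiled
  refine ⟨i, fun u v huv => ?_⟩
  by_contra hnadj
  exact hi (Finset.mem_biUnion.mpr ⟨s(u, v), by simpa using huv, by simpa [bad] using hnadj⟩)

namespace AlmostConst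

variable {V : Type*} {n : ℕ} {x y : V} {a b : Fin n → V}

theorem unique (hn : 3 ≤ n) (hx : AlmostConst x a) (hy : AlmostConst y a) : x = y := by
  obtain ⟨i, hi⟩ := hx
  obtain ⟨i', hi'⟩ := hy
  obtain ⟨j, hji, hji'⟩ := Fin.exists_ne_and_ne_of_two_lt i i' hn
  rw [← hi j hji, ← hi' j hji']

theorem adj {H : SimpleGraph V} (hn : 3 ≤ n) (hx : AlmostConst x a) (hy : AlmostConst y b)
    (hab : ∀ i, H.Adj (a i) (b i)) : H.Adj x y := by
  obtain ⟨i, hi⟩ := hx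
  obtain ⟨i', hi'⟩ := hy
  obtain ⟨j, hji, hji'⟩ := Fin.exists_ne_and_ne_of_two_lt i i' hn
  simpa only [hi j hji, hi' j hji'] using hab j

end AlmostConst

namespace SimRel

variable {V : Type*} {n : ℕ} {a b : Fin n → V}

open Classical in
noncomputable def normalForm (a : Fin n → V) : Fin n → V :=
  if h : ∃ x, AlmostConst x a then fun _ => h.choose else a

theorem normalForm_of_almostConst (h : ∃ x, AlmostConst x a) :
    normalForm a = fun _ => h.choose := dif_pos h

theorem normalForm_of_not_almostConst (h : ¬ ∃ x, AlmostConst x a) : normalForm a = a :=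
  dif_neg h

theorem exists_normalForm_eq_off_one (h : ∃ x, AlmostConst x a) :
    ∃ k, ∀ i ≠ k, normalForm a i = a i := by
  obtain ⟨k, hk⟩ := h.choose_spec
  exact ⟨k, fun i hik => by rw [normalForm_of_almostConst h, hk i hik]⟩

theorem normalForm_eq (hn : 3 ≤ n) (h : SimRel n a b) : normalForm a = normalForm b := by
  obtain rfl | ⟨x, hxa, hxb⟩ := h
  · rfl
  have ha : ∃ x, AlmostConst x a := ⟨x, hxa⟩
  have hb : ∃ x, AlmostConst x b := ⟨x, hxb⟩
  rw [normalForm_of_almostConst ha, normalForm_of_almostConst hb,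
    ha.choose_spec.unique hn hxa, hb.choose_spec.unique hn hxb]

theorem normalForm_eq_of_mk_eq (hn : 3 ≤ n) (h : Quot.mk (SimRel n) a = Quot.mk _ b) :
    normalForm a = normalForm b :=
  congrArg (Quot.lift normalForm fun _ _ => normalForm_eq hn) h

theorem exists_adj_normalForm_off_one {H : SimpleGraph V} (hn : 3 ≤ n)
    (hab : ∀ i, H.Adj (a i) (b i)) :
    ∃ k, ∀ i ≠ k, H.Adj (normalForm a i) (normalForm b i) := by
  by_cases ha : ∃ x, AlmostConst x a <;> by_cases hb : ∃ x, AlmostConst x b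
  · have hxy := ha.choose_spec.adj hn hb.choose_spec hab
    exact ⟨⟨0, by omega⟩, fun i _ => by
      simpa only [normalForm_of_almostConst ha, normalForm_of_almostConst hb] using hxy⟩
  · obtain ⟨k, hk⟩ := exists_normalForm_eq_off_one ha
    exact ⟨k, fun i hik => by simpa only [hk i hik, normalForm_of_not_almostConst hb] using hab i⟩
  · obtain ⟨k, hk⟩ := exists_normalForm_eq_off_one hb
    exact ⟨k, fun i hik => by simpa only [hk i hik, normalForm_of_not_almostConst ha] using hab i⟩
  · exact ⟨⟨0, by omega⟩, fun i _ => by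
      simpa only [normalForm_of_not_almostConst ha, normalForm_of_not_almostConst hb] using hab i⟩

end SimRel

theorem quotGraph.exists_adj_normalForm_out_off_one {V : Type*} {H : SimpleGraph V} {n : ℕ}
    (hn : 3 ≤ n) {A B : Quot (SimRel (V := V) n)} (hAB : (quotGraph H n).Adj A B) :
    ∃ k, ∀ i ≠ k, H.Adj (SimRel.normalForm A.out i) (SimRel.normalForm B.out i) := by
  obtain ⟨-, a, b, rfl, rfl, hab⟩ := hAB
  rw [← SimRel.normalForm_eq_of_mk_eq hn (Quot.out_eq _).symm,
    ← SimRel.normalForm_eq_of_mk_eq hn (Quot.out_eq (Quot.mk _ b)).symm]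
  exact SimRel.exists_adj_normalForm_off_one hn hab

theorem stmt7 {VG VH : Type*} [Fintype VG] (G : SimpleGraph VG) [DecidableRel G.Adj]
    (H : SimpleGraph VH) (hnohom : ¬ Nonempty (G →g H))
    (n : ℕ) (hn3 : 3 ≤ n) (hnm : G.edgeFinset.card < n) :
    ¬ Nonempty (G →g quotGraph H n) := by
  rintro ⟨f⟩
  obtain ⟨i, hi⟩ := G.exists_coord_adj_of_card_edgeFinset_lt
    (fun v => SimRel.normalForm (f v).out)
    (fun _ _ huv => quotGraph.exists_adj_normalForm_out_off_one hn3 (f.map_rel huv))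
    (by simpa using hnm)
  exact hnohom ⟨⟨fun v => SimRel.normalForm (f v).out i, hi _ _⟩⟩
end

section
/- Let G and H be finite graphs that are not 3-colorable, let e be an edge of G and f an edge of H, let N be a gadget, and let W = (G,e) ⊕ (H,f) be the glued graph. Then W is not 3-colorable. -/
/-- A gadget: a finite graph `N` with four distinguished pairwise distinct vertices
`x, x', y, y'` (with `(x,x')` and `(y,y')` non-edges) and a distinguished edge
`(d₁, d₂)`, satisfying the three extension properties with respect to 3-colorings. -/
structure Gadget {VN : Type*} (N : SimpleGraph VN) where
  x : VN
  x' : VN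
  y : VN
  y' : VN
  d₁ : VN
  d₂ : VN
  hxx' : x ≠ x'
  hxy : x ≠ y
  hxy' : x ≠ y'
  hx'y : x' ≠ y
  hx'y' : x' ≠ y'
  hyy' : y ≠ y'
  nonedge_x : ¬ N.Adj x x'
  nonedge_y : ¬ N.Adj y y'
  hd : N.Adj d₁ d₂
  prop_i : ∀ c : N →g (⊤ : SimpleGraph (Fin 3)), Xor' (c x ≠ c x') (c y ≠ c y')
  prop_ii : ∀ c : VN → Fin 3, Xor' (c x ≠ c x') (c y ≠ c y') →
    ∃ c' : N →g (⊤ : SimpleGraph (Fin 3)),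
      c' x = c x ∧ c' x' = c x' ∧ c' y = c y ∧ c' y' = c y'
  prop_iii : ∀ c : VN → Fin 3, c x = c x' → c y = c y' →
    ∃ c' : N.deleteEdges {s(d₁, d₂)} →g (⊤ : SimpleGraph (Fin 3)),
      c' x = c x ∧ c' x' = c x' ∧ c' y = c y ∧ c' y' = c y'

/-- The vertex set of the glued graph `(G,e) ⊕ (H,f)`: the vertices of `G`, the
vertices of `H`, and the vertices of `N` other than `x, x', y, y'` (which are
identified with the endpoints of `e` and `f`). -/
def GlueV (VG VH : Type*) {VN : Type*} {N : SimpleGraph VN} (gd : Gadget N) : Type _ :=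
  VG ⊕ (VH ⊕ {m : VN // m ≠ gd.x ∧ m ≠ gd.x' ∧ m ≠ gd.y ∧ m ≠ gd.y'})

/-- The canonical map from the vertices of `N` into the glued graph, identifying
`x` with `x₀`, `x'` with `x₀'`, `y` with `y₀` and `y'` with `y₀'`. -/
def glueMap {VG VH VN : Type*} [DecidableEq VN] {N : SimpleGraph VN} (gd : Gadget N)
    (x₀ x₀' : VG) (y₀ y₀' : VH) (m : VN) : GlueV VG VH gd :=
  if h1 : m = gd.x then Sum.inl x₀
  else if h2 : m = gd.x' then Sum.inl x₀'
  else if h3 : m = gd.y then Sum.inr (Sum.inl y₀)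
  else if h4 : m = gd.y' then Sum.inr (Sum.inl y₀')
  else Sum.inr (Sum.inr ⟨m, h1, h2, h3, h4⟩)

/-- The glued graph `W = (G, e) ⊕ (H, f)` where `e = (x₀, x₀')` and `f = (y₀, y₀')`:
its edges are those of `G − e`, those of `H − f`, and those of `N` (transported
along `glueMap`). -/
def glued {VG VH VN : Type*} [DecidableEq VN] (G : SimpleGraph VG) (H : SimpleGraph VH)
    {N : SimpleGraph VN} (gd : Gadget N) (x₀ x₀' : VG) (y₀ y₀' : VH) :
    SimpleGraph (GlueV VG VH gd) :=
  SimpleGraph.fromRel (fun a b =>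
    (∃ u v : VG, a = Sum.inl u ∧ b = Sum.inl v ∧ (G.deleteEdges {s(x₀, x₀')}).Adj u v) ∨
    (∃ u v : VH, a = Sum.inr (Sum.inl u) ∧ b = Sum.inr (Sum.inl v) ∧
      (H.deleteEdges {s(y₀, y₀')}).Adj u v) ∨
    (∃ u v : VN, a = glueMap gd x₀ x₀' y₀ y₀' u ∧ b = glueMap gd x₀ x₀' y₀ y₀' v ∧
      N.Adj u v))


/-!
A 3-coloring `c` of `W` restricts along the copy of `N` inside `W` to a 3-coloring of `N`, so by
property (i) of the gadget `c` separates the endpoints of exactly one of `e`, `f`, say of `e`.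
The copy of `G − e` in `W` is then colored by `c` with distinct colors at the endpoints of `e`,
which is a 3-coloring of `G`.
-/

namespace SimpleGraph

variable {V W : Type*} {G : SimpleGraph V} {K : SimpleGraph W}

def Hom.ofDeleteEdge {a b : V} (f : G.deleteEdges {s(a, b)} →g K) (h : K.Adj (f a) (f b)) :
    G →g K where
  toFun := f
  map_rel' {u v} huv := by
    by_cases he : s(u, v) = s(a, b)
    · rcases Sym2.eq_iff.1 he with ⟨rfl, rfl⟩ | ⟨rfl, rfl⟩
      exacts [h, h.symm]
    · exact f.map_rel ((deleteEdges_adj ..).2 ⟨huv, by simpa using he⟩)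

theorem Colorable.of_deleteEdge {a b : V} {n : ℕ}
    (c : (G.deleteEdges {s(a, b)}).Coloring (Fin n)) (h : c a ≠ c b) : G.Colorable n :=
  ⟨Hom.ofDeleteEdge c h⟩

end SimpleGraph

section Glue

variable {VG VH VN : Type*} [DecidableEq VN] {G : SimpleGraph VG} {H : SimpleGraph VH}
  {N : SimpleGraph VN} (gd : Gadget N) (x₀ x₀' : VG) (y₀ y₀' : VH)

@[simp] lemma glueMap_x : glueMap gd x₀ x₀' y₀ y₀' gd.x = Sum.inl x₀ := by
  simp [glueMap, GlueV]

@[simp] lemma glueMap_x' : glueMap gd x₀ x₀' y₀ y₀' gd.x' = Sum.inl x₀' := by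
  simp [glueMap, GlueV, gd.hxx'.symm]

@[simp] lemma glueMap_y : glueMap gd x₀ x₀' y₀ y₀' gd.y = Sum.inr (Sum.inl y₀) := by
  simp [glueMap, GlueV, gd.hxy.symm, gd.hx'y.symm]

@[simp] lemma glueMap_y' : glueMap gd x₀ x₀' y₀ y₀' gd.y' = Sum.inr (Sum.inl y₀') := by
  simp [glueMap, GlueV, gd.hxy'.symm, gd.hx'y'.symm, gd.hyy'.symm]

/-- `glueMap` only identifies `x` with `x'` or `y` with `y'`, and these are non-edges of `N`. -/
lemma glueMap_ne_of_adj {u v : VN} (huv : N.Adj u v) :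
    glueMap gd x₀ x₀' y₀ y₀' u ≠ glueMap gd x₀ x₀' y₀ y₀' v := by
  have := gd.nonedge_x
  have := gd.nonedge_y
  intro h
  unfold glueMap at h
  split_ifs at h <;> simp_all [GlueV, N.adj_comm] <;> split_ifs at h <;> simp_all [N.adj_comm]

def glued.homLeft : G.deleteEdges {s(x₀, x₀')} →g glued G H gd x₀ x₀' y₀ y₀' where
  toFun := Sum.inl
  map_rel' {u v} huv :=
    (SimpleGraph.fromRel_adj _ _ _).2
      ⟨fun h => huv.ne (Sum.inl.inj h), .inl (.inl ⟨u, v, rfl, rfl, huv⟩)⟩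

def glued.homRight : H.deleteEdges {s(y₀, y₀')} →g glued G H gd x₀ x₀' y₀ y₀' where
  toFun := Sum.inr ∘ Sum.inl
  map_rel' {u v} huv :=
    (SimpleGraph.fromRel_adj _ _ _).2
      ⟨fun h => huv.ne (Sum.inl.inj (Sum.inr.inj h)), .inl (.inr (.inl ⟨u, v, rfl, rfl, huv⟩))⟩

@[simps] def glued.homGadget : N →g glued G H gd x₀ x₀' y₀ y₀' where
  toFun := glueMap gd x₀ x₀' y₀ y₀'
  map_rel' {u v} huv :=
    (SimpleGraph.fromRel_adj _ _ _).2
      ⟨glueMap_ne_of_adj gd x₀ x₀' y₀ y₀' huv, .inl (.inr (.inr ⟨u, v, rfl, rfl, huv⟩))⟩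

end Glue

theorem stmt9_general {VG VH VN : Type*} [DecidableEq VN]
    (G : SimpleGraph VG) (H : SimpleGraph VH) (N : SimpleGraph VN) (gd : Gadget N)
    (hG : ¬ G.Colorable 3) (hH : ¬ H.Colorable 3)
    (x₀ x₀' : VG) (y₀ y₀' : VH) :
    ¬ (glued G H gd x₀ x₀' y₀ y₀').Colorable 3 := by
  rintro ⟨c⟩
  have hxor := gd.prop_i (c.comp (glued.homGadget gd x₀ x₀' y₀ y₀'))
  simp only [SimpleGraph.Hom.coe_comp, Function.comp_apply, glued.homGadget_apply,
    glueMap_x, glueMap_x', glueMap_y, glueMap_y'] at hxor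
  rcases hxor with ⟨hx, -⟩ | ⟨hy, -⟩
  · exact hG (.of_deleteEdge (c.comp (glued.homLeft gd x₀ x₀' y₀ y₀')) hx)
  · exact hH (.of_deleteEdge (c.comp (glued.homRight gd x₀ x₀' y₀ y₀')) hy)

theorem stmt9 {VG VH VN : Type*} [Fintype VG] [Fintype VH] [Fintype VN] [DecidableEq VN]
    (G : SimpleGraph VG) (H : SimpleGraph VH) (N : SimpleGraph VN) (gd : Gadget N)
    (hG : ¬ G.Colorable 3) (hH : ¬ H.Colorable 3)
    (x₀ x₀' : VG) (he : G.Adj x₀ x₀') (y₀ y₀' : VH) (hf : H.Adj y₀ y₀') :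
    ¬ (glued G H gd x₀ x₀' y₀ y₀').Colorable 3 :=
  stmt9_general G H N gd hG hH x₀ x₀' y₀ y₀'
end

section
/- Let G and H be finite graphs that are not 3-colorable, let e be a critical edge of G and f a critical edge of H, let N be a gadget, and let W = (G,e) ⊕ (H,f) be the glued graph. Then for every type A, every minor-closed family of operations on A that satisfies Σ_G also satisfies Σ_W, and every minor-closed family of operations on A that satisfies Σ_H also satisfies Σ_W. -/
/-- `M` is a minor-closed family of operations on `A`. -/
def MinorClosed {A : Type*} (M : (n : ℕ) → Set ((Fin n → A) → A)) : Prop :=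
  ∀ (n m : ℕ) (f : (Fin n → A) → A), f ∈ M n → ∀ σ : Fin n → Fin m,
    (fun x : Fin m → A => f (x ∘ σ)) ∈ M m

/-- The family `M` satisfies the condition `Σ_G`. -/
def SatSigma {V A : Type*} (G : SimpleGraph V)
    (M : (n : ℕ) → Set ((Fin n → A) → A)) : Prop :=
  ∃ (f : V → (Fin 3 → A) → A) (g : V → V → (Fin 6 → A) → A),
    (∀ v, f v ∈ M 3) ∧ (∀ u v, G.Adj u v → g u v ∈ M 6) ∧
    ∀ u v, G.Adj u v → ∀ x y z : A,
      f u ![x, y, z] = g u v ![x, y, x, z, y, z] ∧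
      f v ![x, y, z] = g u v ![y, x, z, x, z, y]

/-!
A minor-closed family satisfies Σ_W exactly when the vertices of `W` can be sent to ternary
operations of the family so that the two ends of every edge are the two minors of one 6-ary
operation, taken along the argument patterns of Σ. Given a solution of Σ_G, keep it on `G − e`
and send the rest of `W` to minors of the 6-ary operation `g` of `e`: the minors of `g` along
maps `Fin 6 → Fin 3` realise every edge of `K₃⁶` (pairs of pointwise distinct maps), the two
patterns giving back the operations at the ends of `e`. As `H` is not 3-colorable, every
3-coloring of `H − f` gives both ends of `f` the same color, so, read on the diagonal, it maps
`H − f` into `K₃⁶`; coloring the gadget coordinatewise by property (ii) connects this to the two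
patterns at `x, x'`. The case of Σ_H is symmetric.
-/

theorem SimpleGraph.Coloring.eq_of_not_colorable {V : Type*} {G : SimpleGraph V} {n : ℕ}
    (hG : ¬ G.Colorable n) {u v : V} (c : (G.deleteEdges {s(u, v)}).Coloring (Fin n)) :
    c u = c v := by
  by_contra hne
  refine hG ⟨SimpleGraph.Coloring.mk c fun {a b} hab => ?_⟩
  by_cases hs : s(a, b) = s(u, v)
  · rcases Sym2.eq_iff.1 hs with ⟨rfl, rfl⟩ | ⟨rfl, rfl⟩
    · exact hne
    · exact Ne.symm hne
  · exact c.valid (SimpleGraph.deleteEdges_adj.2 ⟨hab, by simpa using hs⟩)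

namespace Gadget

variable {VN : Type*} {N : SimpleGraph VN}

lemma exists_tuple_coloring (gd : Gadget N) {ι : Type*} (a b c d : ι → Fin 3)
    (h : ∀ i, Xor (a i ≠ b i) (c i ≠ d i)) :
    ∃ col : VN → ι → Fin 3, (∀ m m', N.Adj m m' → ∀ i, col m i ≠ col m' i) ∧
      col gd.x = a ∧ col gd.x' = b ∧ col gd.y = c ∧ col gd.y' = d := by
  classical
  let pre (i : ι) (m : VN) : Fin 3 :=
    if m = gd.x then a i else if m = gd.x' then b i else if m = gd.y then c i else d i
  have hpre : ∀ i, pre i gd.x = a i ∧ pre i gd.x' = b i ∧ pre i gd.y = c i ∧ pre i gd.y' = d i :=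
    fun i => by simp [pre, gd.hxx'.symm, gd.hxy.symm, gd.hxy'.symm, gd.hx'y.symm, gd.hx'y'.symm,
      gd.hyy'.symm]
  have hpre_xor : ∀ i, Xor (pre i gd.x ≠ pre i gd.x') (pre i gd.y ≠ pre i gd.y') := fun i => by
    simpa only [(hpre i).1, (hpre i).2.1, (hpre i).2.2.1, (hpre i).2.2.2] using h i
  choose col hx hx' hy hy' using fun i => gd.prop_ii (pre i) (hpre_xor i)
  refine ⟨fun m i => col i m, fun m m' hmm' i => ((col i).map_adj hmm').ne, ?_, ?_, ?_, ?_⟩ <;>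
    funext i
  · exact (hx i).trans (hpre i).1
  · exact (hx' i).trans (hpre i).2.1
  · exact (hy i).trans (hpre i).2.2.1
  · exact (hy' i).trans (hpre i).2.2.2

end Gadget

section Gluing

variable {VG VH VN α : Type*} {N : SimpleGraph VN} (gd : Gadget N)

def glueLift (φG : VG → α) (φH : VH → α) (φN : VN → α) : GlueV VG VH gd → α :=
  Sum.elim φG (Sum.elim φH (φN ∘ Subtype.val))

variable [DecidableEq VN] {G : SimpleGraph VG} {H : SimpleGraph VH} {x₀ x₀' : VG} {y₀ y₀' : VH}
  {φG : VG → α} {φH : VH → α} {φN : VN → α}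

lemma glueLift_glueMap (hx : φN gd.x = φG x₀) (hx' : φN gd.x' = φG x₀')
    (hy : φN gd.y = φH y₀) (hy' : φN gd.y' = φH y₀') (m : VN) :
    glueLift gd φG φH φN (glueMap gd x₀ x₀' y₀ y₀' m) = φN m := by
  by_cases h1 : m = gd.x
  · rw [show glueMap gd x₀ x₀' y₀ y₀' m = Sum.inl x₀ from dif_pos h1, h1, hx]; rfl
  by_cases h2 : m = gd.x'
  · rw [show glueMap gd x₀ x₀' y₀ y₀' m = Sum.inl x₀' from
      (dif_neg h1).trans (dif_pos h2), h2, hx']; rfl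
  by_cases h3 : m = gd.y
  · rw [show glueMap gd x₀ x₀' y₀ y₀' m = Sum.inr (Sum.inl y₀) from
      (dif_neg h1).trans <| (dif_neg h2).trans (dif_pos h3), h3, hy]; rfl
  by_cases h4 : m = gd.y'
  · rw [show glueMap gd x₀ x₀' y₀ y₀' m = Sum.inr (Sum.inl y₀') from
      (dif_neg h1).trans <| (dif_neg h2).trans <| (dif_neg h3).trans (dif_pos h4), h4, hy']; rfl
  rw [show glueMap gd x₀ x₀' y₀ y₀' m = Sum.inr (Sum.inr ⟨m, h1, h2, h3, h4⟩) from
      (dif_neg h1).trans <| (dif_neg h2).trans <| (dif_neg h3).trans (dif_neg h4)]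
  rfl

lemma glueLift_rel {R : α → α → Prop}
    (hG : ∀ u v, (G.deleteEdges {s(x₀, x₀')}).Adj u v → R (φG u) (φG v))
    (hH : ∀ u v, (H.deleteEdges {s(y₀, y₀')}).Adj u v → R (φH u) (φH v))
    (hN : ∀ u v, N.Adj u v → R (φN u) (φN v))
    (hx : φN gd.x = φG x₀) (hx' : φN gd.x' = φG x₀')
    (hy : φN gd.y = φH y₀) (hy' : φN gd.y' = φH y₀') {a b : GlueV VG VH gd}
    (hab : (glued G H gd x₀ x₀' y₀ y₀').Adj a b) :
    R (glueLift gd φG φH φN a) (glueLift gd φG φH φN b) := by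
  have hmap := glueLift_glueMap gd hx hx' hy hy'
  obtain ⟨-, h | h⟩ := (SimpleGraph.fromRel_adj _ _ _).1 hab <;>
    rcases h with ⟨u, v, rfl, rfl, huv⟩ | ⟨u, v, rfl, rfl, huv⟩ | ⟨u, v, rfl, rfl, huv⟩
  · exact hG u v huv
  · exact hH u v huv
  · rw [hmap, hmap]; exact hN u v huv
  · exact hG v u huv.symm
  · exact hH v u huv.symm
  · rw [hmap, hmap]; exact hN v u huv.symm

end Gluing

namespace SigmaCondition

variable {A : Type*}

def minor {n m : ℕ} (g : (Fin n → A) → A) (σ : Fin n → Fin m) : (Fin m → A) → A :=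
  fun x => g (x ∘ σ)

lemma minor_minor {n m k : ℕ} (g : (Fin n → A) → A) (σ : Fin n → Fin m) (τ : Fin m → Fin k) :
    minor (minor g σ) τ = minor g (τ ∘ σ) :=
  rfl

lemma minor_eq_iff {g : (Fin 6 → A) → A} {σ : Fin 6 → Fin 3} {f : (Fin 3 → A) → A} :
    minor g σ = f ↔ ∀ x y z : A, f ![x, y, z] = g (![x, y, z] ∘ σ) := by
  refine ⟨fun h x y z => h ▸ rfl, fun h => funext fun v => ?_⟩
  have hv : v = ![v 0, v 1, v 2] := funext fun i => by fin_cases i <;> rfl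
  rw [hv, h]
  rfl

/- The two argument patterns `x, y, x, z, y, z` and `y, x, z, x, z, y` of Σ_G, as maps
`Fin 6 → Fin 3`; position `k` carries the pair `(sigmaFst k, sigmaSnd k)`, and these are the six
ordered pairs of distinct elements of `Fin 3`. -/
def sigmaFst : Fin 6 → Fin 3 := ![0, 1, 0, 2, 1, 2]

def sigmaSnd : Fin 6 → Fin 3 := ![1, 0, 2, 0, 2, 1]

lemma vec_comp_sigmaFst (x y z : A) : ![x, y, z] ∘ sigmaFst = ![x, y, x, z, y, z] :=
  funext fun k => by fin_cases k <;> rfl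

lemma vec_comp_sigmaSnd (x y z : A) : ![x, y, z] ∘ sigmaSnd = ![y, x, z, x, z, y] :=
  funext fun k => by fin_cases k <;> rfl

lemma sigmaFst_ne_sigmaSnd : ∀ k, sigmaFst k ≠ sigmaSnd k := by decide

lemma exists_sigmaFst_sigmaSnd : ∀ i j : Fin 3, i ≠ j → ∃ k, sigmaFst k = i ∧ sigmaSnd k = j := by
  decide

lemma exists_factor_sigmaFst_sigmaSnd {ι : Type*} {t t' : ι → Fin 3} (h : ∀ i, t i ≠ t' i) :
    ∃ e : ι → Fin 6, sigmaFst ∘ e = t ∧ sigmaSnd ∘ e = t' := by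
  choose e he using fun i => exists_sigmaFst_sigmaSnd _ _ (h i)
  exact ⟨e, funext fun i => (he i).1, funext fun i => (he i).2⟩

variable (M : (n : ℕ) → Set ((Fin n → A) → A))

def SigmaEdge (f f' : (Fin 3 → A) → A) : Prop :=
  ∃ g ∈ M 6, minor g sigmaFst = f ∧ minor g sigmaSnd = f'

def IsSigmaMap {V : Type*} (R : V → V → Prop) (φ : V → (Fin 3 → A) → A) : Prop :=
  (∀ v, φ v ∈ M 3) ∧ ∀ u v, R u v → SigmaEdge M (φ u) (φ v)

lemma satSigma_iff {V : Type*} (G : SimpleGraph V) :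
    SatSigma G M ↔ ∃ φ, IsSigmaMap M G.Adj φ := by
  simp only [IsSigmaMap, SigmaEdge, minor_eq_iff, vec_comp_sigmaFst, vec_comp_sigmaSnd]
  constructor
  · rintro ⟨f, g, hf, hg, hfg⟩
    exact ⟨f, hf, fun u v huv => ⟨g u v, hg u v huv, fun x y z => (hfg u v huv x y z).1,
      fun x y z => (hfg u v huv x y z).2⟩⟩
  · rintro ⟨φ, hφ, hedge⟩
    have : Nonempty ((Fin 6 → A) → A) := ⟨fun w => w 0⟩
    choose! g hg hgFst hgSnd using hedge
    exact ⟨φ, g, hφ, hg, fun u v huv x y z => ⟨hgFst u v huv x y z, hgSnd u v huv x y z⟩⟩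

variable {M}

lemma IsSigmaMap.comp {V W : Type*} {R : V → V → Prop} {R' : W → W → Prop}
    {φ : V → (Fin 3 → A) → A} (hφ : IsSigmaMap M R φ) {π : W → V}
    (hπ : ∀ u v, R' u v → R (π u) (π v)) : IsSigmaMap M R' (φ ∘ π) :=
  ⟨fun w => hφ.1 (π w), fun u v huv => hφ.2 _ _ (hπ u v huv)⟩

lemma isSigmaMap_minor (hM : MinorClosed M) {g : (Fin 6 → A) → A} (hg : g ∈ M 6) :
    IsSigmaMap M (fun t t' : Fin 6 → Fin 3 => ∀ k, t k ≠ t' k) (minor g) := by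
  refine ⟨fun t => hM 6 3 g hg t, fun t t' h => ?_⟩
  obtain ⟨e, hte, hte'⟩ := exists_factor_sigmaFst_sigmaSnd h
  exact ⟨minor g e, hM 6 6 g hg e, by rw [minor_minor, hte], by rw [minor_minor, hte']⟩

section Glued

variable {VG VH VN : Type*} [DecidableEq VN] {G : SimpleGraph VG} {H : SimpleGraph VH}
  {N : SimpleGraph VN} (gd : Gadget N) {x₀ x₀' : VG} {y₀ y₀' : VH}

lemma IsSigmaMap.glueLift {φG : VG → (Fin 3 → A) → A} {φH : VH → (Fin 3 → A) → A}
    {φN : VN → (Fin 3 → A) → A}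
    (hG : IsSigmaMap M (G.deleteEdges {s(x₀, x₀')}).Adj φG)
    (hH : IsSigmaMap M (H.deleteEdges {s(y₀, y₀')}).Adj φH) (hN : IsSigmaMap M N.Adj φN)
    (hx : φN gd.x = φG x₀) (hx' : φN gd.x' = φG x₀')
    (hy : φN gd.y = φH y₀) (hy' : φN gd.y' = φH y₀') :
    IsSigmaMap M (glued G H gd x₀ x₀' y₀ y₀').Adj (glueLift gd φG φH φN) := by
  refine ⟨?_, fun a b hab => glueLift_rel gd hG.2 hH.2 hN.2 hx hx' hy hy' hab⟩
  rintro (u | v | ⟨m, -⟩)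
  exacts [hG.1 u, hH.1 v, hN.1 m]

theorem satSigma_glued_of_left (hM : MinorClosed M) (hH : ¬ H.Colorable 3) (he : G.Adj x₀ x₀')
    (hfcrit : (H.deleteEdges {s(y₀, y₀')}).Colorable 3) (hSG : SatSigma G M) :
    SatSigma (glued G H gd x₀ x₀' y₀ y₀') M := by
  obtain ⟨φ, hφ⟩ := (satSigma_iff M G).1 hSG
  obtain ⟨g, hg, hgx, hgx'⟩ := hφ.2 _ _ he
  obtain ⟨cH⟩ := hfcrit
  have hcH : cH y₀ = cH y₀' := cH.eq_of_not_colorable hH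
  obtain ⟨col, hcol, hx, hx', hy, hy'⟩ := gd.exists_tuple_coloring sigmaFst sigmaSnd
    (fun _ => cH y₀) (fun _ => cH y₀') fun k => Or.inl ⟨sigmaFst_ne_sigmaSnd k, by simp [hcH]⟩
  have hψ := isSigmaMap_minor hM hg
  refine (satSigma_iff M _).2 ⟨_, IsSigmaMap.glueLift gd
    (hφ.comp fun u v huv => SimpleGraph.deleteEdges_le _ huv)
    (hψ.comp (π := fun v _ => cH v) fun u v huv _ => cH.valid huv) (hψ.comp hcol) ?_ ?_ ?_ ?_⟩
  all_goals simp only [Function.comp_apply, hx, hx', hy, hy', hgx, hgx']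

theorem satSigma_glued_of_right (hM : MinorClosed M) (hG : ¬ G.Colorable 3) (hf : H.Adj y₀ y₀')
    (hecrit : (G.deleteEdges {s(x₀, x₀')}).Colorable 3) (hSH : SatSigma H M) :
    SatSigma (glued G H gd x₀ x₀' y₀ y₀') M := by
  obtain ⟨φ, hφ⟩ := (satSigma_iff M H).1 hSH
  obtain ⟨g, hg, hgy, hgy'⟩ := hφ.2 _ _ hf
  obtain ⟨cG⟩ := hecrit
  have hcG : cG x₀ = cG x₀' := cG.eq_of_not_colorable hG
  obtain ⟨col, hcol, hx, hx', hy, hy'⟩ := gd.exists_tuple_coloring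
    (fun _ => cG x₀) (fun _ => cG x₀') sigmaFst sigmaSnd
    fun k => Or.inr ⟨sigmaFst_ne_sigmaSnd k, by simp [hcG]⟩
  have hψ := isSigmaMap_minor hM hg
  refine (satSigma_iff M _).2 ⟨_, IsSigmaMap.glueLift gd
    (hψ.comp (π := fun v _ => cG v) fun u v huv _ => cG.valid huv)
    (hφ.comp fun u v huv => SimpleGraph.deleteEdges_le _ huv) (hψ.comp hcol) ?_ ?_ ?_ ?_⟩
  all_goals simp only [Function.comp_apply, hx, hx', hy, hy', hgy, hgy']

end Glued

end SigmaCondition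

theorem stmt11_general {VG VH VN : Type*} [DecidableEq VN]
    (G : SimpleGraph VG) (H : SimpleGraph VH) (N : SimpleGraph VN) (gd : Gadget N)
    (hG : ¬ G.Colorable 3) (hH : ¬ H.Colorable 3)
    (x₀ x₀' : VG) (he : G.Adj x₀ x₀')
    (hecrit : (G.deleteEdges {s(x₀, x₀')}).Colorable 3)
    (y₀ y₀' : VH) (hf : H.Adj y₀ y₀')
    (hfcrit : (H.deleteEdges {s(y₀, y₀')}).Colorable 3)
    (A : Type*) (M : (n : ℕ) → Set ((Fin n → A) → A)) (hM : MinorClosed M) :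
    (SatSigma G M → SatSigma (glued G H gd x₀ x₀' y₀ y₀') M) ∧
    (SatSigma H M → SatSigma (glued G H gd x₀ x₀' y₀ y₀') M) :=
  ⟨SigmaCondition.satSigma_glued_of_left gd hM hH he hfcrit,
    SigmaCondition.satSigma_glued_of_right gd hM hG hf hecrit⟩

theorem stmt11 {VG VH VN : Type*} [Fintype VG] [Fintype VH] [Fintype VN] [DecidableEq VN]
    (G : SimpleGraph VG) (H : SimpleGraph VH) (N : SimpleGraph VN) (gd : Gadget N)
    (hG : ¬ G.Colorable 3) (hH : ¬ H.Colorable 3)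
    (x₀ x₀' : VG) (he : G.Adj x₀ x₀')
    (hecrit : (G.deleteEdges {s(x₀, x₀')}).Colorable 3)
    (y₀ y₀' : VH) (hf : H.Adj y₀ y₀')
    (hfcrit : (H.deleteEdges {s(y₀, y₀')}).Colorable 3)
    (A : Type*) (M : (n : ℕ) → Set ((Fin n → A) → A)) (hM : MinorClosed M) :
    (SatSigma G M → SatSigma (glued G H gd x₀ x₀' y₀ y₀') M) ∧
    (SatSigma H M → SatSigma (glued G H gd x₀ x₀' y₀ y₀') M) :=
  stmt11_general G H N gd hG hH x₀ x₀' he hecrit y₀ y₀' hf hfcrit A M hM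
end

section
/- For every n ≥ 1 and every n-ary polymorphism p of the complete graph K₃ — that is, every function p : {0,1,2}ⁿ → {0,1,2} such that p(a) ≠ p(b) whenever a, b ∈ {0,1,2}ⁿ satisfy aᵢ ≠ bᵢ for all i — there exist an index i ∈ {1,…,n} and a permutation α of {0,1,2} such that p(a) = α(aᵢ) for all a ∈ {0,1,2}ⁿ. -/
namespace Stmt12Aux

variable {n : ℕ}

/-- Two-valued tuple: `x` on `S`, `y` off `S`. -/
def tt (S : Finset (Fin n)) (x y : Fin 3) : Fin n → Fin 3 :=
  fun j => if j ∈ S then x else y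

/-- The "filter" associated to a normalized polymorphism. -/
def FF (q : (Fin n → Fin 3) → Fin 3) (S : Finset (Fin n)) : Prop :=
  q (tt S 0 1) = 0

section

variable {q : (Fin n → Fin 3) → Fin 3}
  (hq : ∀ a b : Fin n → Fin 3, (∀ i, a i ≠ b i) → q a ≠ q b)
  (hqc : ∀ x : Fin 3, q (fun _ => x) = x)

include hq hqc

lemma mem_range (a : Fin n → Fin 3) : ∃ i, q a = a i := by
  by_contra h
  push_neg at h
  exact hq a (fun _ => q a) (fun i => (h i).symm) (hqc (q a)).symm

lemma two_val (S : Finset (Fin n)) (x y : Fin 3) :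
    q (tt S x y) = x ∨ q (tt S x y) = y := by
  obtain ⟨i, hi⟩ := mem_range hq hqc (tt S x y)
  by_cases h : i ∈ S
  · left; rw [hi]; simp [tt, h]
  · right; rw [hi]; simp [tt, h]

lemma G_step {x y z : Fin 3} (hxy : x ≠ y) (hyz : y ≠ z) (S : Finset (Fin n))
    (h : q (tt S y z) = y) : q (tt S x y) = x := by
  have hd : q (tt S x y) ≠ q (tt S y z) := by
    apply hq
    intro j
    by_cases hj : j ∈ S <;> simp [tt, hj, hxy, hyz]
  rcases two_val hq hqc S x y with h1 | h1
  · exact h1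
  · rw [h1, h] at hd; exact absurd rfl hd

omit hq hqc in
lemma tt_compl (S : Finset (Fin n)) (x y : Fin 3) : tt Sᶜ x y = tt S y x := by
  funext j
  by_cases hj : j ∈ S <;> simp [tt, hj]

lemma G_swap {x y : Fin 3} (hxy : x ≠ y) (S : Finset (Fin n))
    (h : q (tt S x y) = x) : q (tt S y x) = y := by
  have hd : q (tt Sᶜ x y) ≠ q (tt S x y) := by
    apply hq
    intro j
    by_cases hj : j ∈ S <;> simp [tt, hj, hxy, Ne.symm hxy]
  rcases two_val hq hqc Sᶜ x y with h1 | h1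
  · rw [h1, h] at hd; exact absurd rfl hd
  · rw [← tt_compl]; exact h1

lemma F_pos {x y : Fin 3} (hxy : x ≠ y) {S : Finset (Fin n)} (hF : FF q S) :
    q (tt S x y) = x := by
  have g01 : q (tt S 0 1) = 0 := hF
  have g20 : q (tt S 2 0) = 2 := G_step hq hqc (by decide) (by decide) S g01
  have g12 : q (tt S 1 2) = 1 := G_step hq hqc (by decide) (by decide) S g20
  have g10 : q (tt S 1 0) = 1 := G_swap hq hqc (by decide) S g01
  have g02 : q (tt S 0 2) = 0 := G_swap hq hqc (by decide) S g20
  have g21 : q (tt S 2 1) = 2 := G_swap hq hqc (by decide) S g12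
  fin_cases x <;> fin_cases y <;>
    first
      | exact absurd rfl hxy
      | exact g01 | exact g02 | exact g10 | exact g12 | exact g20 | exact g21
      | simp_all

lemma F_compl {S : Finset (Fin n)} (hF : ¬ FF q S) : FF q Sᶜ := by
  rcases two_val hq hqc S 0 1 with h | h
  · exact absurd h hF
  · have hd : q (tt Sᶜ 0 1) ≠ q (tt S 0 1) := by
      apply hq
      intro j
      by_cases hj : j ∈ S <;> simp [tt, hj]
    rcases two_val hq hqc Sᶜ 0 1 with h1 | h1
    · exact h1
    · rw [h1, h] at hd; exact absurd rfl hd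

lemma F_neg {x y : Fin 3} (hxy : x ≠ y) {S : Finset (Fin n)} (hF : ¬ FF q S) :
    q (tt S x y) = y := by
  have h := F_pos hq hqc (Ne.symm hxy) (F_compl hq hqc hF)
  rwa [tt_compl] at h

lemma F_mono {S T : Finset (Fin n)} (hTS : T ⊆ S) (hF : FF q T) : FF q S := by
  have h1 : q (tt T 1 2) = 1 := F_pos hq hqc (by decide) hF
  have hd : q (tt S 0 1) ≠ q (tt T 1 2) := by
    apply hq
    intro j
    by_cases hj : j ∈ T
    · have hjS : j ∈ S := hTS hj
      simp [tt, hj, hjS]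
    · by_cases hj' : j ∈ S <;> simp [tt, hj, hj']
  rcases two_val hq hqc S 0 1 with h | h
  · exact h
  · rw [h, h1] at hd; exact absurd rfl hd

lemma F_prime {A B : Finset (Fin n)} (hAB : Disjoint A B) (hF : FF q (A ∪ B)) :
    FF q A ∨ FF q B := by
  by_contra hcon
  push_neg at hcon
  obtain ⟨hA, hB⟩ := hcon
  set a : Fin n → Fin 3 := fun j => if j ∈ A then 0 else if j ∈ B then 1 else 2 with ha
  have h2 : q (tt (A ∪ B) 2 0) = 2 := F_pos hq hqc (by decide) hF
  have h0 : q (tt Aᶜ 0 1) = 0 := F_compl hq hqc hA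
  have h1 : q (tt Bᶜ 0 1) = 0 := F_compl hq hqc hB
  have d2 : q a ≠ 2 := by
    rw [← h2]
    apply hq
    intro j
    by_cases hjA : j ∈ A
    · simp [ha, tt, hjA]
    · by_cases hjB : j ∈ B <;> simp [ha, tt, hjA, hjB]
  have d0 : q a ≠ 0 := by
    rw [← h0]
    apply hq
    intro j
    by_cases hjA : j ∈ A
    · simp [ha, tt, hjA]
    · by_cases hjB : j ∈ B <;> simp [ha, tt, hjA, hjB]
  have d1 : q a ≠ 1 := by
    have h1' : q (tt Bᶜ 1 0) = 1 := by
      have := G_swap hq hqc (show (0:Fin 3) ≠ 1 by decide) Bᶜ h1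
      exact this
    rw [← h1']
    apply hq
    intro j
    by_cases hjB : j ∈ B
    · have hjA : j ∉ A := fun hjA => (Finset.disjoint_left.mp hAB hjA) hjB
      simp [ha, tt, hjA, hjB]
    · by_cases hjA : j ∈ A <;> simp [ha, tt, hjA, hjB]
  rcases (show ∀ v : Fin 3, v = 0 ∨ v = 1 ∨ v = 2 from by decide) (q a) with h | h | h
  · exact d0 h
  · exact d1 h
  · exact d2 h

lemma F_single : ∀ S : Finset (Fin n), FF q S → ∃ i, FF q ({i} : Finset (Fin n)) := by
  intro S
  induction S using Finset.strongInductionOn with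
  | _ S ih =>
    intro hF
    have hSne : S.Nonempty := by
      rcases S.eq_empty_or_nonempty with h | h
      · exfalso
        subst h
        have h0 : q (tt (∅ : Finset (Fin n)) 0 1) = 0 := hF
        have e : tt (∅ : Finset (Fin n)) 0 1 = fun _ => (1 : Fin 3) := by
          funext j; simp [tt]
        rw [e, hqc] at h0
        exact absurd h0 (by decide)
      · exact h
    obtain ⟨s, hs⟩ := hSne
    have hdisj : Disjoint ({s} : Finset (Fin n)) (S.erase s) := by
      simp [Finset.disjoint_left]
    have hU : FF q (({s} : Finset (Fin n)) ∪ S.erase s) := by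
      have e : ({s} : Finset (Fin n)) ∪ S.erase s = S := by
        rw [← Finset.insert_eq, Finset.insert_erase hs]
      rwa [e]
    rcases F_prime hq hqc hdisj hU with h | h
    · exact ⟨s, h⟩
    · exact ih (S.erase s) (Finset.erase_ssubset hs) h

end

end Stmt12Aux

open Stmt12Aux in
theorem stmt12 (n : ℕ) (hn : 1 ≤ n) (p : (Fin n → Fin 3) → Fin 3)
    (hp : ∀ a b : Fin n → Fin 3, (∀ i, a i ≠ b i) → p a ≠ p b) :
    ∃ (i : Fin n) (α : Equiv.Perm (Fin 3)), ∀ a : Fin n → Fin 3, p a = α (a i) := by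
  classical
  have hinj : Function.Injective (fun x : Fin 3 => p (fun _ => x)) := by
    intro x y hxy
    by_contra hne
    exact hp (fun _ => x) (fun _ => y) (fun i => hne) hxy
  have hbij := Finite.injective_iff_bijective.mp hinj
  set α : Equiv.Perm (Fin 3) := Equiv.ofBijective _ hbij with hα
  set q : (Fin n → Fin 3) → Fin 3 := fun a => α.symm (p a) with hqdef
  have hq : ∀ a b : Fin n → Fin 3, (∀ i, a i ≠ b i) → q a ≠ q b := by
    intro a b hab h
    exact hp a b hab (α.symm.injective h)
  have hqc : ∀ x : Fin 3, q (fun _ => x) = x := by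
    intro x
    have : p (fun _ => x) = α x := rfl
    show α.symm (p fun _ => x) = x
    rw [this, Equiv.symm_apply_apply]
  have hFu : FF q (Finset.univ : Finset (Fin n)) := by
    have e : tt (Finset.univ : Finset (Fin n)) 0 1 = fun _ => (0 : Fin 3) := by
      funext j; simp [tt]
    show q _ = 0
    rw [e, hqc]
  obtain ⟨i, hi⟩ := F_single hq hqc Finset.univ hFu
  refine ⟨i, α, fun a => ?_⟩
  have key : q a = a i := by
    have hne : ∀ d : Fin 3, d ≠ a i → q a ≠ d := by
      intro d hd
      obtain ⟨e, he⟩ := exists_ne d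
      set U : Finset (Fin n) := Finset.univ.filter (fun j => a j ≠ d) with hUdef
      have hiU : i ∈ U := by
        simp [hUdef]
        exact Ne.symm hd
      have hFU : FF q U := by
        refine F_mono hq hqc ?_ hi
        intro j hj
        rw [Finset.mem_singleton] at hj
        subst hj
        exact hiU
      have hbd : q (tt U d e) = d := F_pos hq hqc (Ne.symm he) hFU
      have hdiff : ∀ j, a j ≠ tt U d e j := by
        intro j
        by_cases hj : j ∈ U
        · have : a j ≠ d := by simpa [hUdef] using hj
          simpa [tt, hj] using this
        · have : a j = d := by simpa [hUdef] using hj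
          simp [tt, hj, this]
          exact Ne.symm he
      have := hq a (tt U d e) hdiff
      rwa [hbd] at this
    exact (show ∀ v c : Fin 3, (∀ d : Fin 3, d ≠ c → v ≠ d) → v = c from by decide)
      (q a) (a i) hne
  have h2 : α.symm (p a) = a i := key
  calc p a = α (α.symm (p a)) := (Equiv.apply_symm_apply α (p a)).symm
    _ = α (a i) := by rw [h2]
end
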